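/- Let K = F_{2^m}, let φ be a field automorphism of K, and let u_{1,1}, u_{2,1}, u_{2,2} ∈ K satisfy u_{2,1} = φ(u_{2,2}) and Tr_{2^m/2}(φ^{−1}(u_{1,1})·u_{2,2}) = 0. Define F : K × K → K × K by F(y,z) = (y·φ(z), z) + Tr_{2^m/2}(u_{2,1}y + u_{2,2}z)·(u_{1,1}·y, 0), the F_2-value of the trace being identified with 0 or 1 in K. Then for every (a,b) ∈ K × K with a ≠ 0, the component function F_{(a,b)} is bent on K × K. -/
import Mathlib


open scoped Classical BigOperators

noncomputable section

/-- The finite field `K = F_{2^m}`. -/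
abbrev K (m : ℕ) := GaloisField 2 m

noncomputable instance (m : ℕ) : Fintype (K m) := Fintype.ofFinite _

/-- The absolute trace `Tr_{2^m/2}` of `K`, viewed as an element of `K`
(its values lie in the prime field `{0,1}`). -/
def trm (m : ℕ) (x : K m) : K m := ∑ j ∈ Finset.range m, x ^ 2 ^ j

/-- `(-1)^b` for `b ∈ {0,1} ⊆ K`. -/
def chiK (m : ℕ) (x : K m) : ℤ := if x = 0 then 1 else -1

/-- The inner product `⟨(y₁,z₁),(y₂,z₂)⟩ = Tr(y₁y₂) + Tr(z₁z₂)` on `V = K × K`. -/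
def ip (m : ℕ) (w v : K m × K m) : K m := trm m (w.1 * v.1) + trm m (w.2 * v.2)

/-- The Walsh transform of a Boolean-valued function on `V = K × K`. -/
def walshV (m : ℕ) (f : K m × K m → K m) (w : K m × K m) : ℤ :=
  ∑ v : K m × K m, chiK m (f v + ip m w v)

variable {m : ℕ}

lemma Kcard (hm : 1 ≤ m) : Fintype.card (K m) = 2 ^ m := by
  have := GaloisField.card 2 m (by omega)
  rwa [Nat.card_eq_fintype_card] at this

lemma Kpow (hm : 1 ≤ m) (x : K m) : x ^ 2 ^ m = x := by
  have := FiniteField.pow_card x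
  rwa [Kcard hm] at this

lemma trm_add (x y : K m) : trm m (x + y) = trm m x + trm m y := by
  simp only [trm, ← Finset.sum_add_distrib]
  exact Finset.sum_congr rfl fun j _ => add_pow_char_pow x y 2 j

lemma trm_zero : trm m 0 = 0 := by simp [trm, Finset.sum_eq_zero]

lemma trm_sq (hm : 1 ≤ m) (x : K m) : trm m x ^ 2 = trm m x := by
  have h : trm m x ^ 2 = ∑ j ∈ Finset.range m, x ^ 2 ^ (j + 1) := by
    have h0 : trm m x ^ 2 = frobenius (K m) 2 (trm m x) := rfl
    rw [h0, trm, map_sum]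
    refine Finset.sum_congr rfl fun j _ => ?_
    rw [frobenius_def, ← pow_mul, ← pow_succ]
  have hp := Kpow hm x
  have h1 : ∑ j ∈ Finset.range (m+1), x ^ 2 ^ j
      = (∑ j ∈ Finset.range m, x ^ 2 ^ (j+1)) + x ^ 2 ^ 0 := Finset.sum_range_succ' _ m
  have h2 : ∑ j ∈ Finset.range (m+1), x ^ 2 ^ j
      = trm m x + x ^ 2 ^ m := Finset.sum_range_succ _ m
  linear_combination h + h2 - h1 + hp

lemma trm_mem (hm : 1 ≤ m) (x : K m) : trm m x = 0 ∨ trm m x = 1 := by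
  have := trm_sq hm x
  have h2 : trm m x * (trm m x - 1) = 0 := by ring_nf; linear_combination this
  rcases mul_eq_zero.mp h2 with h | h
  · exact Or.inl h
  · exact Or.inr (by linear_combination h)

lemma trm_map (hm : 1 ≤ m) (φ : K m ≃+* K m) (x : K m) : trm m (φ x) = trm m x := by
  have h : trm m (φ x) = φ (trm m x) := by
    rw [trm, trm, map_sum]
    exact Finset.sum_congr rfl fun j _ => (map_pow φ.toRingHom x (2 ^ j)).symm
  rcases trm_mem hm x with h0 | h0 <;> rw [h, h0] <;> simp

lemma trm_smul01 (t x : K m) (ht : t = 0 ∨ t = 1) : trm m (t * x) = t * trm m x := by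
  rcases ht with rfl | rfl <;> simp [trm_zero]

lemma chiK_add01 (s t : K m) (hs : s = 0 ∨ s = 1) (ht : t = 0 ∨ t = 1) :
    chiK m (s + t) = chiK m s * chiK m t := by
  have h11 : (1 : K m) + 1 = 0 := by
    have : (2 : K m) = 0 := by
      have := CharP.cast_eq_zero (K m) 2
      simpa using this
    linear_combination this
  rcases hs with rfl | rfl <;> rcases ht with rfl | rfl <;>
    simp [chiK, h11, one_ne_zero]

lemma exists_trm_one (hm : 1 ≤ m) : ∃ x : K m, trm m x = 1 := by
  classical
  by_contra hc
  push_neg at hc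
  have hz : ∀ x : K m, trm m x = 0 := fun x => (trm_mem hm x).resolve_right (hc x)
  -- polynomial argument
  set p : Polynomial (K m) := ∑ j ∈ Finset.range m, Polynomial.X ^ 2 ^ j with hp
  have heval : ∀ x : K m, p.eval x = 0 := by
    intro x
    have : p.eval x = trm m x := by
      simp [hp, trm, Polynomial.eval_finset_sum]
    rw [this, hz]
  have hdeg : p.natDegree ≤ 2 ^ (m - 1) := by
    refine Polynomial.natDegree_sum_le_of_forall_le _ _ fun j hj => ?_
    rw [Finset.mem_range] at hj
    rw [Polynomial.natDegree_X_pow]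
    exact Nat.pow_le_pow_right (by norm_num) (by omega)
  have hpz : p = 0 := by
    refine Polynomial.eq_zero_of_natDegree_lt_card_of_eval_eq_zero p
      Function.injective_id (fun x => heval x) ?_
    rw [Kcard hm]
    calc p.natDegree ≤ 2 ^ (m - 1) := hdeg
      _ < 2 ^ m := Nat.pow_lt_pow_right (by norm_num) (by omega)
  have hc1 : p.coeff 1 = 1 := by
    rw [hp, Polynomial.finset_sum_coeff]
    have : ∀ j ∈ Finset.range m, (Polynomial.X ^ 2 ^ j : Polynomial (K m)).coeff 1
        = if j = 0 then 1 else 0 := by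
      intro j hj
      rw [Polynomial.coeff_X_pow]
      rcases eq_or_ne j 0 with rfl | h
      · simp
      · have h2 : (1 : ℕ) ≠ 2 ^ j :=
          Nat.ne_of_lt (Nat.one_lt_two_pow_iff.mpr h)
        simp [h, h2]
    rw [Finset.sum_congr rfl this, Finset.sum_ite_eq' _ 0]
    simp [Finset.mem_range, hm]
    omega
  rw [hpz] at hc1
  simp at hc1

lemma two_eq_zero : (1 : K m) + 1 = 0 := by
  have h : (2 : K m) = 0 := by simpa using CharP.cast_eq_zero (K m) 2
  linear_combination h

lemma sum_chiK_trm (hm : 1 ≤ m) : ∑ x : K m, chiK m (trm m x) = 0 := by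
  obtain ⟨x₀, hx₀⟩ := exists_trm_one hm
  have hbij : ∑ x : K m, chiK m (trm m x) = ∑ x : K m, chiK m (trm m (x + x₀)) :=
    (Fintype.sum_equiv (Equiv.addRight x₀) _ _ fun x => rfl).symm
  have hneg : ∀ x : K m, chiK m (trm m (x + x₀)) = - chiK m (trm m x) := by
    intro x
    rw [trm_add, hx₀]
    rcases trm_mem hm x with h | h <;> rw [h]
    · simp [chiK, one_ne_zero]
    · rw [two_eq_zero]
      simp [chiK, one_ne_zero]
  rw [Finset.sum_congr rfl fun x _ => hneg x, Finset.sum_neg_distrib] at hbij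
  omega

lemma sum_chiK_trm_mul (hm : 1 ≤ m) (s : K m) :
    ∑ y : K m, chiK m (trm m (s * y)) = if s = 0 then 2 ^ m else 0 := by
  rcases eq_or_ne s 0 with rfl | hs
  · simp [trm_zero, chiK, Kcard hm]
  · rw [if_neg hs, ← sum_chiK_trm hm]
    exact Fintype.sum_equiv (Equiv.mulLeft₀ s hs) _ _ fun y => rfl

lemma chiK_sq (x : K m) : chiK m x ^ 2 = 1 := by
  rw [chiK]; split <;> norm_num

lemma Tinv (hm : 1 ≤ m) (φ : K m ≃+* K m) (u₁₁ u₂₂ : K m)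
    (h2 : trm m (φ.symm u₁₁ * u₂₂) = 0) (u₂₁ y z : K m) :
    trm m (u₂₁*y + u₂₂*(z + trm m (u₂₁*y + u₂₂*z) * φ.symm u₁₁))
      = trm m (u₂₁*y + u₂₂*z) := by
  set t := trm m (u₂₁*y + u₂₂*z) with ht
  have ht01 : t = 0 ∨ t = 1 := trm_mem hm _
  have e : u₂₁*y + u₂₂*(z + t * φ.symm u₁₁) = (u₂₁*y + u₂₂*z) + t*(φ.symm u₁₁ * u₂₂) := by
    ring
  rw [e, trm_add, trm_smul01 _ _ ht01, h2, mul_zero, add_zero, ht]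

lemma main_id (hm : 1 ≤ m) (φ : K m ≃+* K m) (u₁₁ u₂₁ u₂₂ a b w₁ w₂ y z : K m)
    (h2 : trm m (φ.symm u₁₁ * u₂₂) = 0) :
    trm m (a * (y * φ (z + trm m (u₂₁*y + u₂₂*z) * φ.symm u₁₁)
        + trm m (u₂₁*y + u₂₂*(z + trm m (u₂₁*y + u₂₂*z) * φ.symm u₁₁)) * (u₁₁*y)))
      + trm m (b * (z + trm m (u₂₁*y + u₂₂*z) * φ.symm u₁₁))
      + (trm m (w₁*y) + trm m (w₂*(z + trm m (u₂₁*y + u₂₂*z) * φ.symm u₁₁)))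
    = trm m (y * (a * φ z + (w₁ + trm m ((b+w₂) * φ.symm u₁₁) * u₂₁)))
      + trm m ((b + w₂ + trm m ((b+w₂) * φ.symm u₁₁) * u₂₂) * z) := by
  rw [Tinv hm φ u₁₁ u₂₂ h2 u₂₁ y z]
  set c₀ := φ.symm u₁₁ with hc₀
  set t := trm m (u₂₁*y + u₂₂*z) with ht
  set c := trm m ((b+w₂) * c₀) with hc
  have ht01 : t = 0 ∨ t = 1 := trm_mem hm _
  have hc01 : c = 0 ∨ c = 1 := trm_mem hm _
  have hφt : φ (z + t * c₀) = φ z + t * u₁₁ := by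
    rw [map_add]
    congr 1
    rcases ht01 with h | h <;> rw [h]
    · simp
    · simp [hc₀]
  rw [hφt]
  have harg : a * (y * (φ z + t * u₁₁) + t * (u₁₁ * y)) = a * (y * φ z) := by
    linear_combination (a*y*u₁₁*t) * (two_eq_zero (m := m))
  rw [harg]
  have e1 : trm m (b*(z + t*c₀)) = trm m (b*z) + t * trm m (b*c₀) := by
    rw [show b*(z + t*c₀) = b*z + t*(b*c₀) by ring, trm_add, trm_smul01 _ _ ht01]
  have e2 : trm m (w₂*(z + t*c₀)) = trm m (w₂*z) + t * trm m (w₂*c₀) := by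
    rw [show w₂*(z + t*c₀) = w₂*z + t*(w₂*c₀) by ring, trm_add, trm_smul01 _ _ ht01]
  have e3 : trm m (y * (a * φ z + (w₁ + c*u₂₁)))
      = trm m (a*(y*φ z)) + trm m (w₁*y) + c * trm m (u₂₁*y) := by
    rw [show y * (a * φ z + (w₁ + c*u₂₁)) = (a*(y*φ z) + w₁*y) + c*(u₂₁*y) by ring,
      trm_add, trm_add, trm_smul01 _ _ hc01]
  have e4 : trm m ((b + w₂ + c*u₂₂)*z)
      = trm m (b*z) + trm m (w₂*z) + c * trm m (u₂₂*z) := by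
    rw [show (b + w₂ + c*u₂₂)*z = (b*z + w₂*z) + c*(u₂₂*z) by ring,
      trm_add, trm_add, trm_smul01 _ _ hc01]
  rw [e1, e2, e3, e4]
  have hA : c = trm m (b*c₀) + trm m (w₂*c₀) := by
    rw [hc, show (b+w₂)*c₀ = b*c₀ + w₂*c₀ by ring, trm_add]
  have hB : t = trm m (u₂₁*y) + trm m (u₂₂*z) := by
    rw [ht, trm_add]
  linear_combination c * hB - t * hA

lemma involutive_sigma (hm : 1 ≤ m) (φ : K m ≃+* K m) (u₁₁ u₂₂ : K m)
    (h2 : trm m (φ.symm u₁₁ * u₂₂) = 0) (u₂₁ y : K m) :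
    Function.Involutive (fun z : K m => z + trm m (u₂₁*y + u₂₂*z) * φ.symm u₁₁) := by
  intro z
  simp only
  rw [Tinv hm φ u₁₁ u₂₂ h2 u₂₁ y z]
  linear_combination (trm m (u₂₁*y + u₂₂*z) * φ.symm u₁₁) * (two_eq_zero (m := m))

lemma sum_chiK_trm_mul' (hm : 1 ≤ m) (s : K m) :
    ∑ y : K m, chiK m (trm m (y * s)) = if s = 0 then 2 ^ m else 0 := by
  simp_rw [mul_comm]
  exact sum_chiK_trm_mul hm s

/-- `F(y,z) = (y·φ(z), z) + Tr(u_{2,1}y + u_{2,2}z)·(u_{1,1}y, 0)` has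
all its components `F_{(a,b)}`, `a ≠ 0`, bent. -/
theorem stmt12 (m : ℕ) (hm : 1 ≤ m)
    (φ : K m ≃+* K m)
    (u₁₁ u₂₁ u₂₂ : K m)
    (h1 : u₂₁ = φ u₂₂) (h2 : trm m (φ.symm u₁₁ * u₂₂) = 0)
    (F : K m × K m → K m × K m)
    (hF : ∀ y z : K m, F (y, z) =
      (y * φ z + trm m (u₂₁ * y + u₂₂ * z) * (u₁₁ * y), z)) :
    ∀ a b : K m, a ≠ 0 →
      ∀ w : K m × K m, (walshV m (fun v => ip m (a, b) (F v)) w) ^ 2 = 2 ^ (2*m) := by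
  intro a b ha w
  obtain ⟨w₁, w₂⟩ := w
  set c₀ := φ.symm u₁₁ with hc₀
  set c := trm m ((b + w₂) * c₀) with hc
  set b' := b + w₂ + c * u₂₂ with hb'
  set d := w₁ + c * u₂₁ with hd
  set z₀ := φ.symm (a⁻¹ * d) with hz₀
  have hW : walshV m (fun v => ip m (a, b) (F v)) (w₁, w₂)
      = chiK m (trm m (b' * z₀)) * 2 ^ m := by
    rw [walshV, Fintype.sum_prod_type]
    have step1 : ∀ y : K m,
        ∑ z : K m, chiK m (ip m (a, b) (F (y, z)) + ip m (w₁, w₂) (y, z))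
        = ∑ z : K m, chiK m (trm m (y * (a * φ z + d))) * chiK m (trm m (b' * z)) := by
      intro y
      have hinv := involutive_sigma hm φ u₁₁ u₂₂ h2 u₂₁ y
      rw [← Equiv.sum_comp (Function.Involutive.toPerm _ hinv)
        (fun z => chiK m (ip m (a, b) (F (y, z)) + ip m (w₁, w₂) (y, z)))]
      refine Finset.sum_congr rfl fun z _ => ?_
      have hσ : (Function.Involutive.toPerm _ hinv) z
          = z + trm m (u₂₁*y + u₂₂*z) * c₀ := rfl
      rw [hσ, hF, ip, ip]
      simp only
      rw [show trm m (a * (y * φ (z + trm m (u₂₁ * y + u₂₂ * z) * c₀) +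
            trm m (u₂₁ * y + u₂₂ * (z + trm m (u₂₁ * y + u₂₂ * z) * c₀)) * (u₁₁ * y)))
          + trm m (b * (z + trm m (u₂₁ * y + u₂₂ * z) * c₀))
          + (trm m (w₁ * y) + trm m (w₂ * (z + trm m (u₂₁ * y + u₂₂ * z) * c₀)))
          = trm m (y * (a * φ z + d)) + trm m (b' * z) from
        main_id hm φ u₁₁ u₂₁ u₂₂ a b w₁ w₂ y z h2]
      exact chiK_add01 _ _ (trm_mem hm _) (trm_mem hm _)
    rw [Finset.sum_congr rfl fun y _ => step1 y, Finset.sum_comm]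
    have step2 : ∀ z : K m,
        ∑ y : K m, chiK m (trm m (y * (a * φ z + d))) * chiK m (trm m (b' * z))
        = chiK m (trm m (b' * z)) * (if z = z₀ then 2 ^ m else 0) := by
      intro z
      rw [← Finset.sum_mul, sum_chiK_trm_mul' hm, mul_comm]
      congr 1
      have : (a * φ z + d = 0) ↔ z = z₀ := by
        constructor
        · intro h
          have h' : φ z = a⁻¹ * d := by
            have had : a * φ z = d := by
              linear_combination h - d * (two_eq_zero (m := m))
            field_simp
            linear_combination had
          rw [hz₀, ← h', RingEquiv.symm_apply_apply]
        · rintro rfl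
          rw [hz₀, RingEquiv.apply_symm_apply]
          field_simp
          linear_combination d * (two_eq_zero (m := m))
      simp [this]
    rw [Finset.sum_congr rfl fun z _ => step2 z]
    simp [Finset.sum_ite_eq' Finset.univ z₀]
  rw [hW, mul_pow, chiK_sq, one_mul, ← pow_mul, Nat.mul_comm]
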